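/- arXiv:1004.1363 — 3 statements merged into one kernel-verified Lean document; each statement's English description precedes it below -/
import Mathlib

section
/- If S ∈ S¹(I,L), then the Lebesgue measure of the maximal invariant set C_S is zero, provided that the sum of the lengths |I₁| + ⋯ + |I_k| is strictly less than |L| and the nonlinearity N(S) is sufficiently small (depending only on the ratios |I_j|/|L|). -/
/-!
Bounded distortion on a branch `I_j` forces `S' ≥ e^{-ε} |L| / |I_j|` everywhere on `I_j`
(compare with a mean slope of `S` over `I_j`), so by the change of variables formula a
measurable `A ⊆ I_j` satisfies `|L| |A| ≤ e^ε |I_j| |S(A)|`. The maximal invariant set `C` is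
closed and `C ⊆ I ∩ S⁻¹(C)`; summing over the branches gives
`|L| |C| ≤ e^ε (∑ |I_j|) |C|`, and `e^ε ∑ |I_j| < |L|` once `ε` is small, so `|C| = 0`.
-/

open Set MeasureTheory Real Filter Topology

section MaximalInvariantSet

variable {X : Type*} (f : X → X) (s : Set X)

def maximalInvariantSet : Set X := {x ∈ s | ∀ n, f^[n] x ∈ s}

variable {f s}

theorem maximalInvariantSet_subset_inter_preimage :
    maximalInvariantSet f s ⊆ s ∩ f ⁻¹' maximalInvariantSet f s :=
  fun x hx => ⟨hx.1, hx.2 1, fun n => by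
    simpa only [← Function.iterate_succ_apply] using hx.2 (n + 1)⟩

theorem maximalInvariantSet_eq_iInter :
    maximalInvariantSet f s = ⋂ n, {x | ∀ i < n, f^[i] x ∈ s} := by
  ext x
  simp only [maximalInvariantSet, mem_iInter, mem_ofPred_eq]
  exact ⟨fun hx _ i _ => hx.2 i,
    fun hx => ⟨hx 1 0 one_pos, fun n => hx (n + 1) n n.lt_succ_self⟩⟩

theorem isClosed_maximalInvariantSet [TopologicalSpace X] (hs : IsClosed s)
    (hf : ContinuousOn f s) : IsClosed (maximalInvariantSet f s) := by
  rw [maximalInvariantSet_eq_iInter]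
  refine isClosed_iInter fun n => ?_
  induction n with
  | zero => simp
  | succ n ih =>
    convert hf.preimage_isClosed_of_isClosed hs ih using 1
    ext x
    simp only [mem_inter_iff, mem_preimage, mem_ofPred_eq, Nat.forall_lt_succ_left,
      Function.iterate_zero_apply, Function.iterate_succ_apply]

end MaximalInvariantSet

theorem exists_pos_exp_mul_lt {s t : ℝ} (h : s < t) : ∃ ε > 0, exp ε * s < t := by
  have hlim : Tendsto (fun ε => exp ε * s) (𝓝[>] 0) (𝓝 s) := by
    refine (Continuous.tendsto' ?_ 0 s (by simp)).mono_left nhdsWithin_le_nhds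
    fun_prop
  obtain ⟨ε, hlt, hpos⟩ :=
    ((hlim.eventually (gt_mem_nhds h)).and self_mem_nhdsWithin).exists
  exact ⟨ε, hpos, hlt⟩

section Branch

variable {a b c d ε : ℝ} {f f' : ℝ → ℝ}

theorem sub_le_exp_mul_deriv_mul_sub (hcd : c ≤ d)
    (hf : ∀ x ∈ Icc a b, HasDerivAt f (f' x) x) (hf' : ∀ x ∈ Icc a b, 0 < f' x)
    (himg : f '' Icc a b = Icc c d)
    (hlog : ∀ x ∈ Icc a b, ∀ y ∈ Icc a b, log (f' x / f' y) ≤ ε)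
    {x : ℝ} (hx : x ∈ Icc a b) :
    d - c ≤ exp ε * f' x * (b - a) := by
  obtain ⟨u, hu, rfl⟩ : c ∈ f '' Icc a b := himg ▸ left_mem_Icc.2 hcd
  obtain ⟨v, hv, rfl⟩ : d ∈ f '' Icc a b := himg ▸ right_mem_Icc.2 hcd
  have hbound : ∀ y ∈ Icc a b, ‖f' y‖ ≤ exp ε * f' x := fun y hy => by
    rw [Real.norm_of_nonneg (hf' y hy).le, ← div_le_iff₀ (hf' x hx),
      ← log_le_iff_le_exp (div_pos (hf' y hy) (hf' x hx))]
    exact hlog y hy x hx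
  have hlip := (convex_Icc a b).norm_image_sub_le_of_norm_hasDerivWithin_le
    (fun y hy => (hf y hy).hasDerivWithinAt) hbound hu hv
  rw [Real.norm_eq_abs, Real.norm_eq_abs] at hlip
  have hvu : |v - u| ≤ b - a :=
    abs_sub_le_iff.2 ⟨by linarith [hu.1, hv.2], by linarith [hu.2, hv.1]⟩
  calc f v - f u ≤ |f v - f u| := le_abs_self _
    _ ≤ exp ε * f' x * |v - u| := hlip
    _ ≤ exp ε * f' x * (b - a) :=
        mul_le_mul_of_nonneg_left hvu (mul_pos (exp_pos ε) (hf' x hx)).le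

theorem ofReal_mul_volume_le_mul_volume_image (hcd : c ≤ d)
    (hf : ∀ x ∈ Icc a b, HasDerivAt f (f' x) x) (hf' : ∀ x ∈ Icc a b, 0 < f' x)
    (himg : f '' Icc a b = Icc c d)
    (hlog : ∀ x ∈ Icc a b, ∀ y ∈ Icc a b, log (f' x / f' y) ≤ ε)
    {A : Set ℝ} (hA : MeasurableSet A) (hAI : A ⊆ Icc a b) :
    ENNReal.ofReal (d - c) * volume A ≤ ENNReal.ofReal (exp ε * (b - a)) * volume (f '' A) := by
  have hmono : StrictMonoOn f (Icc a b) :=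
    strictMonoOn_of_hasDerivWithinAt_pos (convex_Icc a b)
      (fun x hx => (hf x hx).continuousAt.continuousWithinAt)
      (fun x hx => (hf x (interior_subset hx)).hasDerivWithinAt)
      (fun x hx => hf' x (interior_subset hx))
  have hjac : ∫⁻ x in A, ENNReal.ofReal |f' x| = volume (f '' A) := by
    simpa only [ContinuousLinearMap.det_toSpanSingleton] using
      lintegral_abs_det_fderiv_eq_addHaar_image volume hA
        (fun x hx => (hf x (hAI hx)).hasDerivWithinAt.hasFDerivWithinAt) (hmono.injOn.mono hAI)
  calc ENNReal.ofReal (d - c) * volume A = ∫⁻ _ in A, ENNReal.ofReal (d - c) :=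
        (setLIntegral_const A _).symm
    _ ≤ ∫⁻ x in A, ENNReal.ofReal (exp ε * (b - a)) * ENNReal.ofReal |f' x| := by
        refine setLIntegral_mono' hA fun x hx => ?_
        have hab : a ≤ b := (hAI hx).1.trans (hAI hx).2
        rw [← ENNReal.ofReal_mul (mul_nonneg (exp_pos ε).le (sub_nonneg.2 hab)),
          abs_of_pos (hf' x (hAI hx))]
        exact ENNReal.ofReal_le_ofReal
          (by linarith [sub_le_exp_mul_deriv_mul_sub hcd hf hf' himg hlog (hAI hx)])
    _ = ENNReal.ofReal (exp ε * (b - a)) * volume (f '' A) := by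
        rw [lintegral_const_mul' _ _ ENNReal.ofReal_ne_top, hjac]

end Branch

theorem ofReal_mul_volume_inter_preimage_le {ι : Type*} [Fintype ι] {a b : ι → ℝ}
    {c d ε : ℝ} {f f' : ℝ → ℝ} (hcd : c ≤ d)
    (hf : ∀ x ∈ ⋃ j, Icc (a j) (b j), HasDerivAt f (f' x) x)
    (hf' : ∀ x ∈ ⋃ j, Icc (a j) (b j), 0 < f' x)
    (himg : ∀ j, f '' Icc (a j) (b j) = Icc c d)
    (hlog : ∀ j, ∀ x ∈ Icc (a j) (b j), ∀ y ∈ Icc (a j) (b j), log (f' x / f' y) ≤ ε)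
    {E : Set ℝ} (hE : IsClosed E) :
    ENNReal.ofReal (d - c) * volume ((⋃ j, Icc (a j) (b j)) ∩ f ⁻¹' E) ≤
      ENNReal.ofReal (exp ε * ∑ j, (b j - a j)) * volume E := by
  have hab : ∀ j, a j ≤ b j := fun j =>
    nonempty_Icc.1 (image_nonempty.1 (himg j ▸ nonempty_Icc.2 hcd))
  have hfj : ∀ j, ∀ x ∈ Icc (a j) (b j), HasDerivAt f (f' x) x :=
    fun j x hx => hf x (mem_iUnion_of_mem j hx)
  have hf'j : ∀ j, ∀ x ∈ Icc (a j) (b j), 0 < f' x :=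
    fun j x hx => hf' x (mem_iUnion_of_mem j hx)
  have hbranch : ∀ j, ENNReal.ofReal (d - c) * volume (Icc (a j) (b j) ∩ f ⁻¹' E) ≤
      ENNReal.ofReal (exp ε * (b j - a j)) * volume E := fun j => by
    have hmeas : MeasurableSet (Icc (a j) (b j) ∩ f ⁻¹' E) :=
      (ContinuousOn.preimage_isClosed_of_isClosed
        (fun x hx => (hfj j x hx).continuousAt.continuousWithinAt) isClosed_Icc hE).measurableSet
    refine (ofReal_mul_volume_le_mul_volume_image hcd (hfj j) (hf'j j) (himg j) (hlog j) hmeas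
      inter_subset_left).trans ?_
    gcongr
    exact image_subset_iff.2 inter_subset_right
  calc ENNReal.ofReal (d - c) * volume ((⋃ j, Icc (a j) (b j)) ∩ f ⁻¹' E)
      ≤ ∑ j, ENNReal.ofReal (d - c) * volume (Icc (a j) (b j) ∩ f ⁻¹' E) := by
        rw [iUnion_inter, ← Finset.mul_sum]
        gcongr
        exact measure_iUnion_fintype_le _ _
    _ ≤ ∑ j, ENNReal.ofReal (exp ε * (b j - a j)) * volume E :=
        Finset.sum_le_sum fun j _ => hbranch j
    _ = ENNReal.ofReal (exp ε * ∑ j, (b j - a j)) * volume E := by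
        rw [← Finset.sum_mul, ← ENNReal.ofReal_sum_of_nonneg fun j _ =>
          mul_nonneg (exp_pos ε).le (sub_nonneg.2 (hab j)), Finset.mul_sum]

theorem maximal_invariant_set_measure_zero_general
    (k : ℕ) (a b : Fin k → ℝ)
    (c d : ℝ) (hcd : c < d)
    (hsum : (∑ j, (b j - a j)) < d - c) :
    ∃ ε > 0, ∀ S S' : ℝ → ℝ,
      (∀ x ∈ ⋃ j, Set.Icc (a j) (b j), HasDerivAt S (S' x) x) →
      ContinuousOn S' (⋃ j, Set.Icc (a j) (b j)) →
      (∀ x ∈ ⋃ j, Set.Icc (a j) (b j), 1 < S' x) →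
      (∀ j, S '' Set.Icc (a j) (b j) = Set.Icc c d) →
      (∀ j : Fin k, ∀ x ∈ Set.Icc (a j) (b j), ∀ y ∈ Set.Icc (a j) (b j),
        Real.log (S' x / S' y) ≤ ε) →
      MeasureTheory.volume {x ∈ ⋃ j, Set.Icc (a j) (b j) |
        ∀ n : ℕ, S^[n] x ∈ ⋃ j, Set.Icc (a j) (b j)} = 0 := by
  obtain ⟨ε, hε, hlt⟩ := exists_pos_exp_mul_lt hsum
  refine ⟨ε, hε, fun S S' hder _ hexpand himg hlog => ?_⟩
  change volume (maximalInvariantSet S (⋃ j, Icc (a j) (b j))) = 0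
  set C := maximalInvariantSet S (⋃ j, Icc (a j) (b j))
  have hclosed : IsClosed C :=
    isClosed_maximalInvariantSet (isClosed_iUnion_of_finite fun j => isClosed_Icc)
      fun x hx => (hder x hx).continuousAt.continuousWithinAt
  have hfinite : volume C ≠ ⊤ :=
    measure_ne_top_of_subset (fun _ hx => hx.1)
      (isCompact_iUnion fun j => isCompact_Icc).measure_lt_top.ne
  have hcontract : ENNReal.ofReal (d - c) * volume C ≤
      ENNReal.ofReal (exp ε * ∑ j, (b j - a j)) * volume C :=
    calc ENNReal.ofReal (d - c) * volume C
        ≤ ENNReal.ofReal (d - c) * volume ((⋃ j, Icc (a j) (b j)) ∩ S ⁻¹' C) := by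
          gcongr
          exact maximalInvariantSet_subset_inter_preimage
      _ ≤ _ := ofReal_mul_volume_inter_preimage_le hcd.le hder
          (fun x hx => one_pos.trans (hexpand x hx)) himg hlog hclosed
  by_contra hpos
  rcases (ENNReal.ofReal_le_ofReal_iff').1 ((ENNReal.mul_le_mul_iff_left hpos hfinite).1 hcontract)
    with h | h <;> linarith

/-- If Σ|I_j| < |L| and the nonlinearity N(S) is sufficiently
small (depending only on the ratios |I_j|/|L|), then the Lebesgue measure
of the maximal invariant set C_S is zero. -/
theorem maximal_invariant_set_measure_zero
    (k : ℕ) (hk : 2 ≤ k) (a b : Fin k → ℝ) (hab : ∀ j, a j < b j)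
    (c d : ℝ) (hcd : c < d)
    (hdisj : ∀ i j : Fin k, i ≠ j →
      Disjoint (Set.Icc (a i) (b i)) (Set.Icc (a j) (b j)))
    (hsub : (⋃ j, Set.Icc (a j) (b j)) ⊆ Set.Icc c d)
    (hsum : (∑ j, (b j - a j)) < d - c) :
    ∃ ε > 0, ∀ S S' : ℝ → ℝ,
      (∀ x ∈ ⋃ j, Set.Icc (a j) (b j), HasDerivAt S (S' x) x) →
      ContinuousOn S' (⋃ j, Set.Icc (a j) (b j)) →
      (∀ x ∈ ⋃ j, Set.Icc (a j) (b j), 1 < S' x) →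
      (∀ j, S '' Set.Icc (a j) (b j) = Set.Icc c d) →
      (∀ j : Fin k, ∀ x ∈ Set.Icc (a j) (b j), ∀ y ∈ Set.Icc (a j) (b j),
        Real.log (S' x / S' y) ≤ ε) →
      MeasureTheory.volume {x ∈ ⋃ j, Set.Icc (a j) (b j) |
        ∀ n : ℕ, S^[n] x ∈ ⋃ j, Set.Icc (a j) (b j)} = 0 :=
  maximal_invariant_set_measure_zero_general k a b c d hcd hsum
end

section
/- The map sending a point x ∈ C_S to its itinerary (j₀, j₁, j₂, …), where Sⁿ(x) ∈ I_{jₙ}, is a homeomorphism from C_S onto the full one-sided shift space {1,…,k}^ℕ, conjugating S|_{C_S} to the shift map. -/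
/-!
Since `S'` is continuous and `> 1` on the compact set `I`, it is bounded below by some `λ > 1`,
so by the mean value theorem `S` expands distances on each `I_j` by the factor `λ`. Two points
with the same itinerary therefore have `|Sⁿx - Sⁿy| ≥ λⁿ |x - y|` inside the bounded set `L`,
which forces `x = y`. Conversely, since `S[I_j] ⊇ I_i` for all `i, j`, the points following a
prescribed itinerary for `n` steps form nested nonempty compact sets, whose intersection gives a
point with that itinerary. Disjointness of the closed intervals makes every coordinate of the
itinerary locally constant, hence the itinerary map is continuous, and a continuous bijection from
the compact set `C_S` onto the Hausdorff shift space is a homeomorphism.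
-/

open Set Function

theorem Convex.mul_dist_le_dist_of_le_deriv {D : Set ℝ} (hD : Convex ℝ D) {f f' : ℝ → ℝ}
    (hf : ∀ x ∈ D, HasDerivAt f (f' x) x) {C : ℝ} (hC : ∀ x ∈ D, C ≤ f' x) :
    ∀ x ∈ D, ∀ y ∈ D, C * dist x y ≤ dist (f x) (f y) := by
  have hmono : ∀ x ∈ D, ∀ y ∈ D, x ≤ y → C * (y - x) ≤ f y - f x :=
    hD.mul_sub_le_image_sub_of_le_deriv (fun x hx => (hf x hx).continuousAt.continuousWithinAt)
      (fun x hx => (hf x (interior_subset hx)).differentiableAt.differentiableWithinAt)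
      (fun x hx => (hf x (interior_subset hx)).deriv ▸ hC x (interior_subset hx))
  intro x hx y hy
  rw [Real.dist_eq, Real.dist_eq]
  rcases le_total x y with hxy | hyx
  · rw [abs_sub_comm, abs_of_nonneg (sub_nonneg.mpr hxy), abs_sub_comm]
    exact (hmono x hx y hy hxy).trans (le_abs_self _)
  · rw [abs_of_nonneg (sub_nonneg.mpr hyx)]
    exact (hmono y hy x hx hyx).trans (le_abs_self _)

section Iterates

variable {X : Type*} {S : X → X}

theorem setOf_forall_lt_succ_iterate_mem (S : X → X) (A : ℕ → Set X) (n : ℕ) :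
    {x | ∀ m < n + 1, S^[m] x ∈ A m} = A 0 ∩ S ⁻¹' {x | ∀ m < n, S^[m] x ∈ A (m + 1)} := by
  ext x
  simp only [mem_ofPred_eq, mem_inter_iff, mem_preimage, Nat.forall_lt_succ_left,
    iterate_zero_apply, iterate_succ_apply]

variable [TopologicalSpace X]

theorem isClosed_setOf_forall_lt_iterate_mem {A : ℕ → Set X} (hA : ∀ m, IsClosed (A m))
    (hS : ∀ m, ContinuousOn S (A m)) (n : ℕ) : IsClosed {x | ∀ m < n, S^[m] x ∈ A m} := by
  induction n generalizing A with
  | zero => simp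
  | succ n ih =>
    rw [setOf_forall_lt_succ_iterate_mem]
    exact (hS 0).preimage_isClosed_of_isClosed (hA 0) (ih (fun m => hA _) (fun m => hS _))

theorem isClosed_setOf_forall_iterate_mem {A : ℕ → Set X} (hA : ∀ m, IsClosed (A m))
    (hS : ∀ m, ContinuousOn S (A m)) : IsClosed {x | ∀ m, S^[m] x ∈ A m} := by
  have h : {x | ∀ m, S^[m] x ∈ A m} = ⋂ n, {x | ∀ m < n, S^[m] x ∈ A m} :=
    ext fun x => ⟨fun hx => mem_iInter.mpr fun _ m _ => hx m,
      fun hx m => mem_iInter.mp hx (m + 1) m m.lt_succ_self⟩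
  rw [h]
  exact isClosed_iInter (isClosed_setOf_forall_lt_iterate_mem hA hS)

end Iterates

section Itinerary

variable {X ι : Type*} (S : X → X) (I : ι → Set X)

/-- The set `C_S` of the paper. -/
def survivorSet : Set X := {y ∈ ⋃ j, I j | ∀ n : ℕ, S^[n] y ∈ ⋃ j, I j}

theorem survivorSet_eq : survivorSet S I = {x | ∀ n, S^[n] x ∈ ⋃ j, I j} :=
  ext fun _ => ⟨fun h => h.2, fun h => ⟨h 0, h⟩⟩

theorem mapsTo_survivorSet : MapsTo S (survivorSet S I) (survivorSet S I) := by
  rw [survivorSet_eq]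
  exact fun x hx n => iterate_succ_apply S n x ▸ hx (n + 1)

noncomputable def itinerary (x : survivorSet S I) (n : ℕ) : ι :=
  (mem_iUnion.mp (x.2.2 n)).choose

variable {S I}

theorem iterate_mem_itinerary (x : survivorSet S I) (n : ℕ) :
    S^[n] x ∈ I (itinerary S I x n) :=
  (mem_iUnion.mp (x.2.2 n)).choose_spec

theorem itinerary_eq_iff (hdisj : Pairwise (Disjoint on I)) {x : survivorSet S I} {n : ℕ}
    {j : ι} : itinerary S I x n = j ↔ S^[n] x ∈ I j :=
  ⟨fun h => h ▸ iterate_mem_itinerary x n,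
    fun h => hdisj.eq (not_disjoint_iff.mpr ⟨_, iterate_mem_itinerary x n, h⟩)⟩

theorem itinerary_mk_apply_eq_shift (hdisj : Pairwise (Disjoint on I)) (x : survivorSet S I)
    (hSx : S x ∈ survivorSet S I) :
    itinerary S I ⟨S x, hSx⟩ = fun n => itinerary S I x (n + 1) :=
  funext fun n => (itinerary_eq_iff hdisj).mpr <|
    iterate_succ_apply S n x ▸ iterate_mem_itinerary x (n + 1)

theorem nonempty_setOf_forall_lt_succ_iterate_mem (hne : ∀ j, (I j).Nonempty)
    (hcov : ∀ i j, I i ⊆ S '' I j) (ω : ℕ → ι) (n : ℕ) :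
    {x | ∀ m < n + 1, S^[m] x ∈ I (ω m)}.Nonempty := by
  induction n generalizing ω with
  | zero =>
    obtain ⟨x, hx⟩ := hne (ω 0)
    exact ⟨x, fun m hm => Nat.lt_one_iff.mp hm ▸ hx⟩
  | succ n ih =>
    obtain ⟨y, hy⟩ := ih fun m => ω (m + 1)
    obtain ⟨x, hx, rfl⟩ := hcov _ (ω 0) (hy 0 n.succ_pos)
    rw [setOf_forall_lt_succ_iterate_mem]
    exact ⟨x, hx, hy⟩

section Topology

variable [TopologicalSpace X]

theorem isCompact_survivorSet [Finite ι] [T2Space X] (hI : ∀ j, IsCompact (I j))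
    (hS : ContinuousOn S (⋃ j, I j)) : IsCompact (survivorSet S I) := by
  have hU := isCompact_iUnion hI
  refine hU.of_isClosed_subset ?_ fun x hx => hx.1
  rw [survivorSet_eq]
  exact isClosed_setOf_forall_iterate_mem (fun _ => hU.isClosed) (fun _ => hS)

theorem continuous_itinerary [Finite ι] [TopologicalSpace ι] [DiscreteTopology ι]
    (hdisj : Pairwise (Disjoint on I)) (hI : ∀ j, IsClosed (I j))
    (hS : ContinuousOn S (⋃ j, I j)) : Continuous (itinerary S I) := by
  refine continuous_pi fun n => continuous_iff_isClosed.mpr fun s _ => ?_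
  have hSn : Continuous fun x : survivorSet S I => S^[n] x :=
    ((hS.mono fun _ hx => hx.1).iterate (mapsTo_survivorSet S I) n).comp_continuous
      continuous_subtype_val Subtype.prop
  rw [← biUnion_preimage_singleton]
  refine s.toFinite.isClosed_biUnion fun j _ => ?_
  have hfib : (fun x : survivorSet S I => itinerary S I x n) ⁻¹' {j} =
      (fun x : survivorSet S I => S^[n] x) ⁻¹' I j :=
    ext fun _ => itinerary_eq_iff hdisj
  rw [hfib]
  exact (hI j).preimage hSn

theorem exists_forall_iterate_mem [T2Space X] (hI : ∀ j, IsCompact (I j))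
    (hS : ∀ j, ContinuousOn S (I j)) (hne : ∀ j, (I j).Nonempty) (hcov : ∀ i j, I i ⊆ S '' I j)
    (ω : ℕ → ι) : ∃ x, ∀ n, S^[n] x ∈ I (ω n) := by
  have hclosed (n : ℕ) : IsClosed {x | ∀ m < n + 1, S^[m] x ∈ I (ω m)} :=
    isClosed_setOf_forall_lt_iterate_mem (fun m => (hI (ω m)).isClosed) (fun m => hS (ω m)) _
  obtain ⟨x, hx⟩ := IsCompact.nonempty_iInter_of_sequence_nonempty_isCompact_isClosed
    (fun n => {x | ∀ m < n + 1, S^[m] x ∈ I (ω m)})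
    (fun n _ hx m hm => hx m (hm.trans n.succ.lt_succ_self))
    (nonempty_setOf_forall_lt_succ_iterate_mem hne hcov ω)
    ((hI (ω 0)).of_isClosed_subset (hclosed 0) fun _ hx => hx 0 one_pos) hclosed
  exact ⟨x, fun n => mem_iInter.mp hx n n n.lt_succ_self⟩

theorem surjective_itinerary [T2Space X] (hdisj : Pairwise (Disjoint on I))
    (hI : ∀ j, IsCompact (I j)) (hS : ContinuousOn S (⋃ j, I j)) (hne : ∀ j, (I j).Nonempty)
    (hcov : ∀ i j, I i ⊆ S '' I j) : Surjective (itinerary S I) := by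
  intro ω
  obtain ⟨x, hx⟩ := exists_forall_iterate_mem hI (fun j => hS.mono (subset_iUnion I j)) hne hcov ω
  exact ⟨⟨x, mem_iUnion_of_mem _ (hx 0), fun n => mem_iUnion_of_mem _ (hx n)⟩,
    funext fun n => (itinerary_eq_iff hdisj).mpr (hx n)⟩

end Topology

section Metric

variable [MetricSpace X] {lam : ℝ}

theorem eq_of_forall_iterate_mem_of_expanding (hlam : 1 < lam)
    (hexp : ∀ j, ∀ x ∈ I j, ∀ y ∈ I j, lam * dist x y ≤ dist (S x) (S y))
    (hbdd : Bornology.IsBounded (⋃ j, I j)) {ω : ℕ → ι} {x y : X}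
    (hx : ∀ n, S^[n] x ∈ I (ω n)) (hy : ∀ n, S^[n] y ∈ I (ω n)) : x = y := by
  obtain ⟨R, hR⟩ := Metric.isBounded_iff.mp hbdd
  have hgrow (n : ℕ) : lam ^ n * dist x y ≤ dist (S^[n] x) (S^[n] y) := by
    induction n with
    | zero => simp
    | succ n ih =>
      rw [pow_succ', mul_assoc, iterate_succ_apply', iterate_succ_apply']
      exact (mul_le_mul_of_nonneg_left ih (by linarith)).trans
        (hexp (ω n) _ (hx n) _ (hy n))
  by_contra hne
  have hpos := dist_pos.mpr hne
  obtain ⟨n, hn⟩ := pow_unbounded_of_one_lt (R / dist x y) hlam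
  rw [div_lt_iff₀ hpos] at hn
  have := (hgrow n).trans (hR (mem_iUnion_of_mem _ (hx n)) (mem_iUnion_of_mem _ (hy n)))
  linarith

theorem injective_itinerary (hlam : 1 < lam)
    (hexp : ∀ j, ∀ x ∈ I j, ∀ y ∈ I j, lam * dist x y ≤ dist (S x) (S y))
    (hbdd : Bornology.IsBounded (⋃ j, I j)) : Injective (itinerary S I) := fun x y hxy =>
  Subtype.ext <| eq_of_forall_iterate_mem_of_expanding hlam hexp hbdd
    (iterate_mem_itinerary x) (hxy ▸ iterate_mem_itinerary y)

end Metric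

end Itinerary

theorem itinerary_homeomorphism_general
    (k : ℕ) (a b : Fin k → ℝ) (hab : ∀ j, a j < b j)
    (c d : ℝ)
    (hdisj : ∀ i j : Fin k, i ≠ j →
      Disjoint (Set.Icc (a i) (b i)) (Set.Icc (a j) (b j)))
    (hsub : (⋃ j, Set.Icc (a j) (b j)) ⊆ Set.Icc c d)
    (S S' : ℝ → ℝ)
    (hderiv : ∀ x ∈ ⋃ j, Set.Icc (a j) (b j), HasDerivAt S (S' x) x)
    (hcont : ContinuousOn S' (⋃ j, Set.Icc (a j) (b j)))
    (hexp : ∀ x ∈ ⋃ j, Set.Icc (a j) (b j), 1 < S' x)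
    (himg : ∀ j, S '' Set.Icc (a j) (b j) = Set.Icc c d) :
    ∃ h : {x : ℝ // x ∈ {y ∈ ⋃ j, Set.Icc (a j) (b j) |
        ∀ n : ℕ, S^[n] y ∈ ⋃ j, Set.Icc (a j) (b j)}} ≃ₜ (ℕ → Fin k),
      (∀ x : {x : ℝ // x ∈ {y ∈ ⋃ j, Set.Icc (a j) (b j) |
          ∀ n : ℕ, S^[n] y ∈ ⋃ j, Set.Icc (a j) (b j)}},
        ∀ n : ℕ, S^[n] (x : ℝ) ∈ Set.Icc (a (h x n)) (b (h x n))) ∧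
      (∀ x : {x : ℝ // x ∈ {y ∈ ⋃ j, Set.Icc (a j) (b j) |
          ∀ n : ℕ, S^[n] y ∈ ⋃ j, Set.Icc (a j) (b j)}},
        ∀ hSx : S (x : ℝ) ∈ {y ∈ ⋃ j, Set.Icc (a j) (b j) |
          ∀ n : ℕ, S^[n] y ∈ ⋃ j, Set.Icc (a j) (b j)},
        h ⟨S (x : ℝ), hSx⟩ = fun n => h x (n + 1)) := by
  set I : Fin k → Set ℝ := fun j => Icc (a j) (b j)
  have hI (j : Fin k) : IsCompact (I j) := isCompact_Icc
  have hU : IsCompact (⋃ j, I j) := isCompact_iUnion hI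
  have hS : ContinuousOn S (⋃ j, I j) := fun x hx =>
    (hderiv x hx).continuousAt.continuousWithinAt
  obtain ⟨lam, hlam, hlamS'⟩ := hU.exists_forall_le' hcont hexp
  have hexpand (j : Fin k) : ∀ x ∈ I j, ∀ y ∈ I j, lam * dist x y ≤ dist (S x) (S y) :=
    (convex_Icc (a j) (b j)).mul_dist_le_dist_of_le_deriv
      (fun x hx => hderiv x (mem_iUnion_of_mem j hx))
      (fun x hx => hlamS' x (mem_iUnion_of_mem j hx))
  have hcov (i j : Fin k) : I i ⊆ S '' I j := himg j ▸ (subset_iUnion I i).trans hsub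
  have hpd : Pairwise (Disjoint on I) := fun i j => hdisj i j
  have : CompactSpace (survivorSet S I) :=
    isCompact_iff_compactSpace.mp (isCompact_survivorSet hI hS)
  let e : survivorSet S I ≃ (ℕ → Fin k) := Equiv.ofBijective _
    ⟨injective_itinerary hlam hexpand hU.isBounded,
      surjective_itinerary hpd hI hS (fun j => nonempty_Icc.mpr (hab j).le) hcov⟩
  let h : survivorSet S I ≃ₜ (ℕ → Fin k) :=
    Continuous.homeoOfEquivCompactToT2 (f := e)
      (continuous_itinerary hpd (fun _ => isClosed_Icc) hS)
  exact ⟨h, iterate_mem_itinerary, itinerary_mk_apply_eq_shift hpd⟩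

/-- The itinerary map x ↦ (j₀, j₁, …), where Sⁿ(x) ∈ I_{jₙ},
is a homeomorphism from C_S onto the full one-sided shift {1,…,k}^ℕ,
conjugating S|_{C_S} to the shift map. -/
theorem itinerary_homeomorphism
    (k : ℕ) (hk : 2 ≤ k) (a b : Fin k → ℝ) (hab : ∀ j, a j < b j)
    (c d : ℝ) (hcd : c < d)
    (hdisj : ∀ i j : Fin k, i ≠ j →
      Disjoint (Set.Icc (a i) (b i)) (Set.Icc (a j) (b j)))
    (hsub : (⋃ j, Set.Icc (a j) (b j)) ⊆ Set.Icc c d)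
    (S S' : ℝ → ℝ)
    (hderiv : ∀ x ∈ ⋃ j, Set.Icc (a j) (b j), HasDerivAt S (S' x) x)
    (hcont : ContinuousOn S' (⋃ j, Set.Icc (a j) (b j)))
    (hexp : ∀ x ∈ ⋃ j, Set.Icc (a j) (b j), 1 < S' x)
    (himg : ∀ j, S '' Set.Icc (a j) (b j) = Set.Icc c d) :
    ∃ h : {x : ℝ // x ∈ {y ∈ ⋃ j, Set.Icc (a j) (b j) |
        ∀ n : ℕ, S^[n] y ∈ ⋃ j, Set.Icc (a j) (b j)}} ≃ₜ (ℕ → Fin k),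
      (∀ x : {x : ℝ // x ∈ {y ∈ ⋃ j, Set.Icc (a j) (b j) |
          ∀ n : ℕ, S^[n] y ∈ ⋃ j, Set.Icc (a j) (b j)}},
        ∀ n : ℕ, S^[n] (x : ℝ) ∈ Set.Icc (a (h x n)) (b (h x n))) ∧
      (∀ x : {x : ℝ // x ∈ {y ∈ ⋃ j, Set.Icc (a j) (b j) |
          ∀ n : ℕ, S^[n] y ∈ ⋃ j, Set.Icc (a j) (b j)}},
        ∀ hSx : S (x : ℝ) ∈ {y ∈ ⋃ j, Set.Icc (a j) (b j) |
          ∀ n : ℕ, S^[n] y ∈ ⋃ j, Set.Icc (a j) (b j)},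
        h ⟨S (x : ℝ), hSx⟩ = fun n => h x (n + 1)) :=
  itinerary_homeomorphism_general k a b hab c d hdisj hsub S S' hderiv hcont hexp himg
end

section
/- For S ∈ S¹(I,L) with nonlinearity N(S) ≤ ε, any two cylinder intervals I_w, I_{w'} of the same depth n corresponding to words differing only in the last symbol satisfy e^{-2nε} ≤ (|I_w|/|I_{w'}|) · (|I_{j'_n}|/|I_{j_n}|)^{-1} ≤ e^{2nε}. -/
/-!
Each cylinder `I_w` of depth `n` is an interval that `S^n` maps increasingly onto `L`, so by the
mean value theorem `|L| = (S^n)'(ξ) |I_w|` for some `ξ ∈ I_w`, and likewise `|L| = S'(η) |I_j|`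
for some `η ∈ I_j`. Hence the ratio in question equals
`(S^n)'(ξ') S'(η) / ((S^n)'(ξ) S'(η'))`. Expanding `(S^n)'` by the chain rule, the factors pair
up as values of `S'` at two points of a common interval `I_j` (the first `n - 1` orbit points
because the words agree there, the last two pairs through `j_n` and `j'_n`), and each such
quotient is at most `e^ε`. So the ratio is at most `e^{(n+1)ε} ≤ e^{2nε}`, and exchanging the
two words bounds it from below.
-/

open MeasureTheory Set

theorem hasDerivAt_iterate_of_orbit {𝕜 : Type*} [NontriviallyNormedField 𝕜] {f f' : 𝕜 → 𝕜}
    {x : 𝕜} {n : ℕ} (hf : ∀ m < n, HasDerivAt f (f' (f^[m] x)) (f^[m] x)) :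
    HasDerivAt f^[n] (∏ m ∈ Finset.range n, f' (f^[m] x)) x := by
  induction n with
  | zero => simpa using hasDerivAt_id x
  | succ n ih =>
    rw [Function.iterate_succ', Finset.prod_range_succ, mul_comm]
    exact (hf n n.lt_succ_self).comp x (ih fun m hm => hf m (hm.trans n.lt_succ_self))

theorem exists_mem_Icc_sub_eq_mul_sub {f f' : ℝ → ℝ} {p q : ℝ} (hpq : p < q)
    (hf : ∀ x ∈ Icc p q, HasDerivAt f (f' x) x) :
    ∃ ξ ∈ Icc p q, f q - f p = f' ξ * (q - p) := by
  obtain ⟨ξ, hξ, hslope⟩ := exists_hasDerivAt_eq_slope f f' hpq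
    (fun x hx => (hf x hx).continuousAt.continuousWithinAt)
    (fun x hx => hf x (Ioo_subset_Icc_self hx))
  exact ⟨ξ, Ioo_subset_Icc_self hξ, by rw [hslope, div_mul_cancel₀ _ (sub_ne_zero.2 hpq.ne')]⟩

theorem strictMonoOn_Icc_of_hasDerivAt_pos {f f' : ℝ → ℝ} {p q : ℝ}
    (hf : ∀ x ∈ Icc p q, HasDerivAt f (f' x) x) (hf' : ∀ x ∈ Icc p q, 0 < f' x) :
    StrictMonoOn f (Icc p q) :=
  strictMonoOn_of_hasDerivWithinAt_pos (convex_Icc p q)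
    (fun x hx => (hf x hx).continuousAt.continuousWithinAt)
    (fun x hx => (hf x (interior_subset hx)).hasDerivWithinAt)
    (fun x hx => hf' x (interior_subset hx))

theorem ContinuousOn.apply_eq_of_image_Icc_eq {α δ : Type*} [ConditionallyCompleteLinearOrder α]
    [TopologicalSpace α] [OrderTopology α] [DenselyOrdered α] [LinearOrder δ]
    [TopologicalSpace δ] [OrderClosedTopology δ] {f : α → δ} {p q : α} {c d : δ} (hpq : p ≤ q)
    (hfc : ContinuousOn f (Icc p q)) (hfm : MonotoneOn f (Icc p q))
    (himg : f '' Icc p q = Icc c d) : f p = c ∧ f q = d := by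
  rw [hfc.image_Icc_of_monotoneOn hpq hfm] at himg
  exact (Icc_eq_Icc_iff (hfm (left_mem_Icc.2 hpq) (right_mem_Icc.2 hpq) hpq)).1 himg

theorem StrictMonoOn.Icc_inter_preimage_Icc {α β : Type*} [LinearOrder α] [Preorder β]
    {f : α → β} {a b p q : α} (hf : StrictMonoOn f (Icc a b)) (hp : p ∈ Icc a b)
    (hq : q ∈ Icc a b) : Icc a b ∩ f ⁻¹' Icc (f p) (f q) = Icc p q := by
  ext x
  constructor
  · rintro ⟨hx, hpx, hxq⟩
    exact ⟨(hf.le_iff_le hp hx).1 hpx, (hf.le_iff_le hx hq).1 hxq⟩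
  · rintro ⟨hpx, hxq⟩
    have hx : x ∈ Icc a b := ⟨hp.1.trans hpx, hxq.trans hq.2⟩
    exact ⟨hx, (hf.le_iff_le hp hx).2 hpx, (hf.le_iff_le hx hq).2 hxq⟩

theorem mul_le_mul_of_common_value {K A A' B B' D D' E E' C : ℝ} (hD : 0 < D) (hD' : 0 < D')
    (hE : 0 < E) (hE' : 0 < E') (hA : K = D * A) (hA' : K = D' * A') (hB : K = E * B)
    (hB' : K = E' * B') (h : D' * E ≤ C * (D * E')) : A * B' ≤ C * A' * B := by
  have hdiv : ∀ {X Y : ℝ}, 0 < X → K = X * Y → Y = K / X := fun hX hK =>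
    (eq_div_iff hX.ne').2 (by rw [hK, mul_comm])
  rw [hdiv hD hA, hdiv hD' hA', hdiv hE hB, hdiv hE' hB', div_mul_div_comm, mul_assoc,
    div_mul_div_comm, ← mul_div_assoc, div_le_div_iff₀ (by positivity) (by positivity)]
  nlinarith [mul_le_mul_of_nonneg_left h (mul_self_nonneg K)]

section Cylinder

variable {k : ℕ} (S : ℝ → ℝ) (a b : Fin k → ℝ)

def wordCylinder {n : ℕ} (w : Fin n → Fin k) : Set ℝ :=
  {x | ∀ m : Fin n, S^[m] x ∈ Icc (a (w m)) (b (w m))}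

theorem wordCylinder_succ {n : ℕ} (w : Fin (n + 1) → Fin k) :
    wordCylinder S a b w = Icc (a (w 0)) (b (w 0)) ∩ S ⁻¹' wordCylinder S a b (Fin.tail w) := by
  ext x
  simp [wordCylinder, Fin.forall_fin_succ, Fin.tail, Function.iterate_succ_apply]

theorem wordCylinder_one (w : Fin 1 → Fin k) :
    wordCylinder S a b w = Icc (a (w 0)) (b (w 0)) := by
  ext x
  simp [wordCylinder, Fin.forall_fin_one]

variable {S a b} {S' : ℝ → ℝ} {c d ε : ℝ}

theorem apply_endpoints_eq (hab : ∀ j, a j < b j)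
    (hderiv : ∀ j, ∀ x ∈ Icc (a j) (b j), HasDerivAt S (S' x) x)
    (hpos : ∀ j, ∀ x ∈ Icc (a j) (b j), 0 < S' x)
    (himg : ∀ j, S '' Icc (a j) (b j) = Icc c d) (j : Fin k) : S (a j) = c ∧ S (b j) = d :=
  ContinuousOn.apply_eq_of_image_Icc_eq (hab j).le
    (fun x hx => (hderiv j x hx).continuousAt.continuousWithinAt)
    (strictMonoOn_Icc_of_hasDerivAt_pos (hderiv j) (hpos j)).monotoneOn (himg j)

theorem wordCylinder_eq_Icc (hab : ∀ j, a j < b j) (hsub : (⋃ j, Icc (a j) (b j)) ⊆ Icc c d)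
    (hderiv : ∀ j, ∀ x ∈ Icc (a j) (b j), HasDerivAt S (S' x) x)
    (hpos : ∀ j, ∀ x ∈ Icc (a j) (b j), 0 < S' x)
    (himg : ∀ j, S '' Icc (a j) (b j) = Icc c d) :
    ∀ n (w : Fin (n + 1) → Fin k), ∃ p q, p < q ∧ wordCylinder S a b w = Icc p q ∧
      S^[n + 1] p = c ∧ S^[n + 1] q = d := by
  intro n
  induction n with
  | zero =>
    intro w
    refine ⟨a (w 0), b (w 0), hab (w 0), wordCylinder_one S a b w, ?_⟩
    exact apply_endpoints_eq hab hderiv hpos himg (w 0)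
  | succ n ih =>
    intro w
    obtain ⟨p, q, hpq, hcyl, hp, hq⟩ := ih (Fin.tail w)
    have hL : Icc p q ⊆ S '' Icc (a (w 0)) (b (w 0)) := by
      rw [himg, ← hcyl]
      exact fun x hx => hsub (mem_iUnion_of_mem _ (hx 0))
    obtain ⟨p', hp', rfl⟩ := hL (left_mem_Icc.2 hpq.le)
    obtain ⟨q', hq', rfl⟩ := hL (right_mem_Icc.2 hpq.le)
    have hmono := strictMonoOn_Icc_of_hasDerivAt_pos (hderiv (w 0)) (hpos (w 0))
    refine ⟨p', q', (hmono.lt_iff_lt hp' hq').1 hpq, ?_, hp, hq⟩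
    rw [wordCylinder_succ, hcyl, hmono.Icc_inter_preimage_Icc hp' hq']

theorem exists_mem_wordCylinder_sub_eq_deriv_mul (hab : ∀ j, a j < b j)
    (hsub : (⋃ j, Icc (a j) (b j)) ⊆ Icc c d)
    (hderiv : ∀ j, ∀ x ∈ Icc (a j) (b j), HasDerivAt S (S' x) x)
    (hpos : ∀ j, ∀ x ∈ Icc (a j) (b j), 0 < S' x)
    (himg : ∀ j, S '' Icc (a j) (b j) = Icc c d) (n : ℕ) (w : Fin (n + 1) → Fin k) :
    ∃ ξ ∈ wordCylinder S a b w,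
      d - c = (∏ m ∈ Finset.range (n + 1), S' (S^[m] ξ)) *
        (volume (wordCylinder S a b w)).toReal := by
  obtain ⟨p, q, hpq, hcyl, hp, hq⟩ := wordCylinder_eq_Icc hab hsub hderiv hpos himg n w
  have hD : ∀ x ∈ Icc p q, HasDerivAt S^[n + 1] (∏ m ∈ Finset.range (n + 1), S' (S^[m] x)) x :=
    fun x hx => hasDerivAt_iterate_of_orbit fun m hm =>
      hderiv _ _ ((hcyl ▸ hx : x ∈ wordCylinder S a b w) ⟨m, hm⟩)
  obtain ⟨ξ, hξ, hslope⟩ := exists_mem_Icc_sub_eq_mul_sub hpq hD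
  refine ⟨ξ, hcyl ▸ hξ, ?_⟩
  rw [← hp, ← hq, hslope, hcyl, Real.volume_Icc, ENNReal.toReal_ofReal (sub_nonneg.2 hpq.le)]

theorem exists_mem_Icc_sub_eq_deriv_mul_length (hab : ∀ j, a j < b j)
    (hderiv : ∀ j, ∀ x ∈ Icc (a j) (b j), HasDerivAt S (S' x) x)
    (hpos : ∀ j, ∀ x ∈ Icc (a j) (b j), 0 < S' x)
    (himg : ∀ j, S '' Icc (a j) (b j) = Icc c d) (j : Fin k) :
    ∃ η ∈ Icc (a j) (b j), d - c = S' η * (b j - a j) := by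
  obtain ⟨hc, hd⟩ := apply_endpoints_eq hab hderiv hpos himg j
  rw [← hc, ← hd]
  exact exists_mem_Icc_sub_eq_mul_sub (hab j) (hderiv j)

theorem deriv_le_exp_mul (hpos : ∀ j, ∀ x ∈ Icc (a j) (b j), 0 < S' x)
    (hN : ∀ j, ∀ x ∈ Icc (a j) (b j), ∀ y ∈ Icc (a j) (b j), Real.log (S' x / S' y) ≤ ε)
    {j : Fin k} {x y : ℝ} (hx : x ∈ Icc (a j) (b j)) (hy : y ∈ Icc (a j) (b j)) :
    S' x ≤ Real.exp ε * S' y := by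
  have h := hN j x hx y hy
  rwa [Real.log_le_iff_le_exp (div_pos (hpos j x hx) (hpos j y hy)),
    div_le_iff₀ (hpos j y hy)] at h

theorem deriv_orbit_pos (hpos : ∀ j, ∀ x ∈ Icc (a j) (b j), 0 < S' x) {n : ℕ}
    {w : Fin n → Fin k} {x : ℝ} (hx : x ∈ wordCylinder S a b w) {m : ℕ} (hm : m < n) :
    0 < S' (S^[m] x) :=
  hpos _ _ (hx ⟨m, hm⟩)

theorem prod_deriv_orbit_mul_le (hpos : ∀ j, ∀ x ∈ Icc (a j) (b j), 0 < S' x)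
    (hN : ∀ j, ∀ x ∈ Icc (a j) (b j), ∀ y ∈ Icc (a j) (b j), Real.log (S' x / S' y) ≤ ε)
    {N : ℕ} {w w' : Fin (N + 1) → Fin k} (hinit : Fin.init w = Fin.init w') {ξ ξ' η η' : ℝ}
    (hξ : ξ ∈ wordCylinder S a b w) (hξ' : ξ' ∈ wordCylinder S a b w')
    (hη : η ∈ Icc (a (w (Fin.last N))) (b (w (Fin.last N))))
    (hη' : η' ∈ Icc (a (w' (Fin.last N))) (b (w' (Fin.last N)))) :
    (∏ m ∈ Finset.range (N + 1), S' (S^[m] ξ')) * S' η ≤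
      Real.exp ε ^ (N + 2) * ((∏ m ∈ Finset.range (N + 1), S' (S^[m] ξ)) * S' η') := by
  have hprefix : ∏ m ∈ Finset.range N, S' (S^[m] ξ') ≤
      Real.exp ε ^ N * ∏ m ∈ Finset.range N, S' (S^[m] ξ) := by
    calc ∏ m ∈ Finset.range N, S' (S^[m] ξ')
        ≤ ∏ m ∈ Finset.range N, Real.exp ε * S' (S^[m] ξ) := by
          refine Finset.prod_le_prod (fun m hm => (deriv_orbit_pos hpos hξ'
            (Nat.lt_succ_of_lt (Finset.mem_range.1 hm))).le) fun m hm => ?_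
          have hmN : m < N := Finset.mem_range.1 hm
          have hw : w (Fin.castSucc ⟨m, hmN⟩) = w' (Fin.castSucc ⟨m, hmN⟩) :=
            congrFun hinit ⟨m, hmN⟩
          exact deriv_le_exp_mul hpos hN (hw ▸ hξ' (Fin.castSucc ⟨m, hmN⟩))
            (hξ (Fin.castSucc ⟨m, hmN⟩))
      _ = Real.exp ε ^ N * ∏ m ∈ Finset.range N, S' (S^[m] ξ) := by
          rw [Finset.prod_mul_distrib, Finset.prod_const, Finset.card_range]
  have hlast' : S' (S^[N] ξ') ≤ Real.exp ε * S' η' :=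
    deriv_le_exp_mul hpos hN (hξ' (Fin.last N)) hη'
  have hlast : S' η ≤ Real.exp ε * S' (S^[N] ξ) := deriv_le_exp_mul hpos hN hη (hξ (Fin.last N))
  have hprod_nonneg : 0 ≤ ∏ m ∈ Finset.range N, S' (S^[m] ξ) :=
    Finset.prod_nonneg fun m hm =>
      (deriv_orbit_pos hpos hξ (Nat.lt_succ_of_lt (Finset.mem_range.1 hm))).le
  have hbound_nonneg : 0 ≤ Real.exp ε ^ N * ∏ m ∈ Finset.range N, S' (S^[m] ξ) :=
    mul_nonneg (by positivity) hprod_nonneg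
  rw [Finset.prod_range_succ, Finset.prod_range_succ]
  calc (∏ m ∈ Finset.range N, S' (S^[m] ξ')) * S' (S^[N] ξ') * S' η
      ≤ (Real.exp ε ^ N * ∏ m ∈ Finset.range N, S' (S^[m] ξ)) * (Real.exp ε * S' η') *
          (Real.exp ε * S' (S^[N] ξ)) :=
        mul_le_mul (mul_le_mul hprefix hlast' (hpos _ _ (hξ' (Fin.last N))).le hbound_nonneg)
          hlast (hpos _ _ hη).le
          (mul_nonneg hbound_nonneg (mul_nonneg (by positivity) (hpos _ _ hη').le))
    _ = Real.exp ε ^ (N + 2) * ((∏ m ∈ Finset.range N, S' (S^[m] ξ)) * S' (S^[N] ξ) * S' η') := by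
        ring

theorem volume_wordCylinder_mul_le (hab : ∀ j, a j < b j)
    (hsub : (⋃ j, Icc (a j) (b j)) ⊆ Icc c d)
    (hderiv : ∀ j, ∀ x ∈ Icc (a j) (b j), HasDerivAt S (S' x) x)
    (hpos : ∀ j, ∀ x ∈ Icc (a j) (b j), 0 < S' x)
    (himg : ∀ j, S '' Icc (a j) (b j) = Icc c d)
    (hN : ∀ j, ∀ x ∈ Icc (a j) (b j), ∀ y ∈ Icc (a j) (b j), Real.log (S' x / S' y) ≤ ε)
    (hε : 0 ≤ ε) {N : ℕ} {w w' : Fin (N + 1) → Fin k} (hinit : Fin.init w = Fin.init w') :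
    (volume (wordCylinder S a b w)).toReal * (b (w' (Fin.last N)) - a (w' (Fin.last N))) ≤
      Real.exp (2 * (N + 1 : ℕ) * ε) * (volume (wordCylinder S a b w')).toReal *
        (b (w (Fin.last N)) - a (w (Fin.last N))) := by
  obtain ⟨ξ, hξ, hA⟩ := exists_mem_wordCylinder_sub_eq_deriv_mul hab hsub hderiv hpos himg N w
  obtain ⟨ξ', hξ', hA'⟩ := exists_mem_wordCylinder_sub_eq_deriv_mul hab hsub hderiv hpos himg N w'
  obtain ⟨η, hη, hB⟩ := exists_mem_Icc_sub_eq_deriv_mul_length hab hderiv hpos himg (w (Fin.last N))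
  obtain ⟨η', hη', hB'⟩ :=
    exists_mem_Icc_sub_eq_deriv_mul_length hab hderiv hpos himg (w' (Fin.last N))
  have hprod_pos {x : ℝ} {v : Fin (N + 1) → Fin k} (hx : x ∈ wordCylinder S a b v) :
      0 < ∏ m ∈ Finset.range (N + 1), S' (S^[m] x) :=
    Finset.prod_pos fun m hm => deriv_orbit_pos hpos hx (Finset.mem_range.1 hm)
  have hpow : Real.exp ε ^ (N + 2) ≤ Real.exp (2 * (N + 1 : ℕ) * ε) := by
    rw [← Real.exp_nat_mul]
    gcongr
    push_cast
    nlinarith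
  refine mul_le_mul_of_common_value (hprod_pos hξ) (hprod_pos hξ') (hpos _ _ hη) (hpos _ _ hη')
    hA hA' hB hB' ((prod_deriv_orbit_mul_le hpos hN hinit hξ hξ' hη hη').trans ?_)
  exact mul_le_mul_of_nonneg_right hpow (mul_pos (hprod_pos hξ) (hpos _ _ hη')).le

end Cylinder

/-- For S ∈ S¹(I,L) with N(S) ≤ ε, two depth-n cylinder
intervals I_w, I_{w'} corresponding to words differing only in the last
symbol satisfy
e^{-2nε} ≤ (|I_w|/|I_{w'}|)·(|I_{j'_n}|/|I_{j_n}|)^{-1} ≤ e^{2nε},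
stated here in the cross-multiplied form
e^{-2nε}·|I_{w'}|·|I_{j_n}| ≤ |I_w|·|I_{j'_n}| ≤ e^{2nε}·|I_{w'}|·|I_{j_n}|. -/
theorem cylinder_length_comparison
    (k : ℕ) (a b : Fin k → ℝ) (hab : ∀ j, a j < b j)
    (c d : ℝ) (ε : ℝ) (hε : 0 ≤ ε)
    (hsub : (⋃ j, Set.Icc (a j) (b j)) ⊆ Set.Icc c d)
    (S S' : ℝ → ℝ)
    (hderiv : ∀ x ∈ ⋃ j, Set.Icc (a j) (b j), HasDerivAt S (S' x) x)
    (hexp : ∀ x ∈ ⋃ j, Set.Icc (a j) (b j), 1 < S' x)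
    (himg : ∀ j, S '' Set.Icc (a j) (b j) = Set.Icc c d)
    (hN : ∀ j : Fin k, ∀ x ∈ Set.Icc (a j) (b j), ∀ y ∈ Set.Icc (a j) (b j),
      Real.log (S' x / S' y) ≤ ε)
    (n : ℕ) (hn : 1 ≤ n) (w w' : Fin n → Fin k)
    (hlast : ∀ m : Fin n, (m : ℕ) + 1 < n → w m = w' m) :
    Real.exp (-(2 * n * ε)) *
        (volume {x : ℝ | ∀ m : Fin n,
            S^[(m : ℕ)] x ∈ Set.Icc (a (w' m)) (b (w' m))}).toReal *
        (b (w (Fin.last (n-1) |>.cast (by omega))) -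
          a (w (Fin.last (n-1) |>.cast (by omega))))
      ≤ (volume {x : ℝ | ∀ m : Fin n,
            S^[(m : ℕ)] x ∈ Set.Icc (a (w m)) (b (w m))}).toReal *
        (b (w' (Fin.last (n-1) |>.cast (by omega))) -
          a (w' (Fin.last (n-1) |>.cast (by omega)))) ∧
    (volume {x : ℝ | ∀ m : Fin n,
            S^[(m : ℕ)] x ∈ Set.Icc (a (w m)) (b (w m))}).toReal *
        (b (w' (Fin.last (n-1) |>.cast (by omega))) -
          a (w' (Fin.last (n-1) |>.cast (by omega))))
      ≤ Real.exp (2 * n * ε) *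
        (volume {x : ℝ | ∀ m : Fin n,
            S^[(m : ℕ)] x ∈ Set.Icc (a (w' m)) (b (w' m))}).toReal *
        (b (w (Fin.last (n-1) |>.cast (by omega))) -
          a (w (Fin.last (n-1) |>.cast (by omega)))) := by
  obtain ⟨N, rfl⟩ : ∃ N, n = N + 1 := ⟨n - 1, by omega⟩
  have hderiv' j x (hx : x ∈ Icc (a j) (b j)) := hderiv x (mem_iUnion_of_mem j hx)
  have hpos j x (hx : x ∈ Icc (a j) (b j)) : 0 < S' x :=
    one_pos.trans (hexp x (mem_iUnion_of_mem j hx))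
  have hinit : Fin.init w = Fin.init w' := funext fun m => hlast m.castSucc (by simp)
  have hle := volume_wordCylinder_mul_le hab hsub hderiv' hpos himg hN hε hinit
  have hge := volume_wordCylinder_mul_le hab hsub hderiv' hpos himg hN hε hinit.symm
  refine ⟨?_, hle⟩
  rw [mul_assoc, Real.exp_neg, inv_mul_le_iff₀ (Real.exp_pos _), ← mul_assoc]
  exact hge
end
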